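/- Let V be a finite-dimensional real inner product space, 𝔤 ⊆ 𝔰𝔬(V) ≅ Λ²V, and R : Λ²V → Λ²V self-adjoint, non-negative, satisfying the Bianchi identity, with image 𝔤, commuting with ad_ω for all ω ∈ 𝔤. Let ω₁,...,ω_k be an orthonormal basis of 𝔤 and λ the Casimir eigenvalue on V (so Σ_α (R^{1/2}ω_α)² = λ·id_V). Then for every η ∈ Λ²V with R(η) = 0 (i.e. η in the orthogonal complement of 𝔤 in Λ²V), one has Σ_α (ad_{R^{1/2}ω_α})² η = 2λ·η. -/

import Mathlib

/-!
Write `B_α = R^{1/2} ω_α`. As `R^{1/2}` is self-adjoint with square `R`, it kills the orthogonal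
complement of `𝔤 = range R`; hence `R A = Σ_α ⟨A, B_α⟩ B_α`, and `⟨B_α, η⟩ = ⟨ω_α, R^{1/2} η⟩ = 0`
because `R η = 0` forces `R^{1/2} η = 0`. Expanding the double commutator,
`Σ_α [B_α, [B_α, η]] = (Σ_α B_α²) η + η (Σ_α B_α²) - 2 Σ_α B_α η B_α = 2λη - 2 Σ_α B_α η B_α`.
The last sum vanishes by the Bianchi identity: contracting `R(X∧Z)Y + R(Z∧Y)X + R(Y∧X)Z = 0`
in `Z` against `η`, the third term gives `⟨R(Y∧X), η⟩ = 0` and each of the first two gives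
`-½ Σ_α ⟨η B_α X, B_α Y⟩ = ½ ⟨(Σ_α B_α η B_α) X, Y⟩`.
-/

open scoped RealInnerProductSpace BigOperators

/-- The endomorphism of `V` corresponding to the 2-vector `X ∧ Y`, i.e. `X ⊗ Y♭ - Y ⊗ X♭`. -/
noncomputable def wedgeEnd {V : Type*} [NormedAddCommGroup V] [InnerProductSpace ℝ V]
    (X Y : V) : V →ₗ[ℝ] V :=
  ((innerSL ℝ Y).toLinearMap).smulRight X - ((innerSL ℝ X).toLinearMap).smulRight Y

/-- The inner product on `Λ²V`, realized on (anti-symmetric) endomorphisms as `½ Tr(Aᵀ B)`. -/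
noncomputable def twoFormInner {V : Type*} [NormedAddCommGroup V] [InnerProductSpace ℝ V]
    [FiniteDimensional ℝ V] (A B : V →ₗ[ℝ] V) : ℝ :=
  (1 / 2 : ℝ) * LinearMap.trace ℝ V (LinearMap.adjoint A ∘ₗ B)

theorem sum_lie_lie {A ι : Type*} [Ring A] [Fintype ι] (b : ι → A) (x : A) :
    ∑ i, ⁅b i, ⁅b i, x⁆⁆ = (∑ i, b i * b i) * x + x * ∑ i, b i * b i - 2 * ∑ i, b i * x * b i := by
  simp only [Ring.lie_def, Finset.sum_mul, Finset.mul_sum, ← Finset.sum_add_distrib,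
    ← Finset.sum_sub_distrib]
  exact Finset.sum_congr rfl fun i _ => by noncomm_ring

section CasimirSetting

variable {V : Type*} [NormedAddCommGroup V] [InnerProductSpace ℝ V] [FiniteDimensional ℝ V]

lemma twoFormInner_eq_sum_inner {ι : Type*} [Fintype ι] (b : OrthonormalBasis ι ℝ V)
    (A B : V →ₗ[ℝ] V) : twoFormInner A B = 1 / 2 * ∑ i, ⟪A (b i), B (b i)⟫ := by
  simp only [twoFormInner, LinearMap.trace_eq_sum_inner _ b, LinearMap.comp_apply,
    LinearMap.adjoint_inner_right]

lemma twoFormInner_comm (A B : V →ₗ[ℝ] V) : twoFormInner A B = twoFormInner B A := by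
  simp only [twoFormInner_eq_sum_inner (stdOrthonormalBasis ℝ V), real_inner_comm]

lemma twoFormInner_self_eq_zero {A : V →ₗ[ℝ] V} : twoFormInner A A = 0 ↔ A = 0 := by
  let b := stdOrthonormalBasis ℝ V
  refine ⟨fun h => b.toBasis.ext fun i => ?_, fun h => by simp [h, twoFormInner]⟩
  rw [twoFormInner_eq_sum_inner b, mul_eq_zero, Finset.sum_eq_zero_iff_of_nonneg
    fun i _ => real_inner_self_nonneg] at h
  simpa using h.resolve_left (by norm_num) i (Finset.mem_univ i)

noncomputable def twoFormInnerBilin : LinearMap.BilinForm ℝ (V →ₗ[ℝ] V) :=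
  LinearMap.mk₂ ℝ twoFormInner
    (fun A A' B => by simp [twoFormInner, LinearMap.add_comp, mul_add])
    (fun r A B => by simp [twoFormInner, LinearMap.smul_comp]; ring)
    (fun A B B' => by simp [twoFormInner, LinearMap.comp_add, mul_add])
    (fun r A B => by simp [twoFormInner, LinearMap.comp_smul]; ring)

@[simp] lemma twoFormInnerBilin_apply (A B : V →ₗ[ℝ] V) :
    twoFormInnerBilin A B = twoFormInner A B := rfl

lemma twoFormInner_smulRight_innerSL (C : V →ₗ[ℝ] V) (u v : V) :
    twoFormInner C ((innerSL ℝ u).toLinearMap.smulRight v) = ⟪C u, v⟫ / 2 := by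
  have h : LinearMap.adjoint C ∘ₗ (innerSL ℝ u).toLinearMap.smulRight v
      = (innerSL ℝ u).toLinearMap.smulRight (LinearMap.adjoint C v) := by
    ext; simp
  rw [twoFormInner, h, LinearMap.trace_smulRight]
  simp [LinearMap.adjoint_inner_right]
  ring

lemma inner_apply_eq_neg_of_adjoint_eq_neg {C : V →ₗ[ℝ] V} (hC : LinearMap.adjoint C = -C)
    (u v : V) : ⟪C u, v⟫ = -⟪u, C v⟫ := by
  rw [← LinearMap.adjoint_inner_right, hC, LinearMap.neg_apply, inner_neg_right]

lemma twoFormInner_wedgeEnd {C : V →ₗ[ℝ] V} (hC : LinearMap.adjoint C = -C) (X Y : V) :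
    twoFormInner (wedgeEnd X Y) C = ⟪X, C Y⟫ := by
  have hskew := inner_apply_eq_neg_of_adjoint_eq_neg hC X Y
  rw [twoFormInner_comm, wedgeEnd, ← twoFormInnerBilin_apply, map_sub]
  simp only [twoFormInnerBilin_apply, twoFormInner_smulRight_innerSL, hskew, real_inner_comm X]
  ring

lemma apply_eq_zero_of_twoFormInner_apply_apply {Rh : (V →ₗ[ℝ] V) → (V →ₗ[ℝ] V)}
    (hRhself : ∀ A B, twoFormInner (Rh A) B = twoFormInner A (Rh B)) {A : V →ₗ[ℝ] V}
    (h : twoFormInner A (Rh (Rh A)) = 0) : Rh A = 0 :=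
  twoFormInner_self_eq_zero.mp (by rwa [hRhself])

lemma twoFormInner_sub_sum_smul_orthonormal {ι : Type*} [Fintype ι] [DecidableEq ι]
    {ω : ι → V →ₗ[ℝ] V} (hω : ∀ α β, twoFormInner (ω α) (ω β) = if α = β then 1 else 0)
    (X : V →ₗ[ℝ] V) (β : ι) :
    twoFormInner (X - ∑ α, twoFormInner X (ω α) • ω α) (ω β) = 0 := by
  rw [← twoFormInnerBilin_apply]
  simp [hω]

lemma apply_eq_sum_twoFormInner_smul {R Rh : (V →ₗ[ℝ] V) →ₗ[ℝ] (V →ₗ[ℝ] V)}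
    (hRhsq : ∀ A, Rh (Rh A) = R A)
    (hRhself : ∀ A B, twoFormInner (Rh A) B = twoFormInner A (Rh B))
    {ι : Type*} [Fintype ι] [DecidableEq ι] {ω : ι → V →ₗ[ℝ] V}
    (hω_orth : ∀ α β, twoFormInner (ω α) (ω β) = if α = β then 1 else 0)
    (hω_span : LinearMap.range R ≤ Submodule.span ℝ (Set.range ω)) (A : V →ₗ[ℝ] V) :
    R A = ∑ α, twoFormInner A (Rh (ω α)) • Rh (ω α) := by
  set P := ∑ α, twoFormInner (Rh A) (ω α) • ω α
  have hQ_perp : LinearMap.range R ≤ LinearMap.ker (twoFormInnerBilin (Rh A - P)) :=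
    hω_span.trans <| Submodule.span_le.mpr <| Set.range_subset_iff.mpr <|
      twoFormInner_sub_sum_smul_orthonormal hω_orth (Rh A)
  have hRhQ : Rh (Rh A - P) = 0 :=
    apply_eq_zero_of_twoFormInner_apply_apply hRhself <| by
      rw [hRhsq]; exact hQ_perp (LinearMap.mem_range_self R _)
  calc R A = Rh P := by rw [← hRhsq, ← sub_eq_zero, ← map_sub, hRhQ]
    _ = ∑ α, twoFormInner A (Rh (ω α)) • Rh (ω α) := by simp [P, hRhself]

section Bianchi

variable {ι : Type*} [Fintype ι] {R : (V →ₗ[ℝ] V) → (V →ₗ[ℝ] V)} {B : ι → V →ₗ[ℝ] V}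

lemma apply_wedgeEnd_eq_sum (hR : ∀ A, R A = ∑ α, twoFormInner A (B α) • B α)
    (hB : ∀ α, LinearMap.adjoint (B α) = -B α) (X Y : V) :
    R (wedgeEnd X Y) = ∑ α, ⟪X, B α Y⟫ • B α := by
  simp only [hR, twoFormInner_wedgeEnd (hB _)]

lemma sum_inner_comp_eq_zero_of_bianchi (hR : ∀ A, R A = ∑ α, twoFormInner A (B α) • B α)
    (hB : ∀ α, LinearMap.adjoint (B α) = -B α)
    (hBianchi : ∀ X Y Z : V,
      R (wedgeEnd X Y) Z + R (wedgeEnd Y Z) X + R (wedgeEnd Z X) Y = 0)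
    {η : V →ₗ[ℝ] V} (hη : LinearMap.adjoint η = -η) (hBη : ∀ α, twoFormInner (B α) η = 0)
    (X Y : V) : ∑ α, ⟪η (B α X), B α Y⟫ = 0 := by
  set F := ∑ α, (innerSL ℝ (B α X)).toLinearMap.smulRight (B α Y)
  set G := ∑ α, (innerSL ℝ (B α Y)).toLinearMap.smulRight (B α X)
  -- the Bianchi identity for `(X, Z, Y)`, read as an identity of endomorphisms in `Z`
  have hcontract : G - F + R (wedgeEnd Y X) = 0 := by
    ext Z
    have hskew : ∀ α, ⟪X, B α Z⟫ = -⟪B α X, Z⟫ := fun α => by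
      rw [inner_apply_eq_neg_of_adjoint_eq_neg (hB α), neg_neg]
    rw [LinearMap.zero_apply, ← hBianchi X Z Y]
    simp only [apply_wedgeEnd_eq_sum hR hB, F, G, LinearMap.add_apply, LinearMap.sub_apply,
      LinearMap.sum_apply, LinearMap.smul_apply, LinearMap.smulRight_apply,
      ContinuousLinearMap.coe_coe, innerSL_apply_apply, hskew,
      fun α => real_inner_comm (B α Y) Z, neg_smul, Finset.sum_neg_distrib,
      LinearMap.neg_apply]
    abel
  have hRη : twoFormInner η (R (wedgeEnd Y X)) = 0 := by
    rw [twoFormInner_comm, hR, ← twoFormInnerBilin_apply]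
    simp [hBη]
  have hηskew : ∀ α, ⟪η (B α Y), B α X⟫ = -⟪η (B α X), B α Y⟫ := fun α => by
    rw [inner_apply_eq_neg_of_adjoint_eq_neg hη, real_inner_comm]
  have hpair := congrArg (twoFormInner η) hcontract
  simp only [F, G, ← twoFormInnerBilin_apply, map_add, map_sub, map_sum, map_zero] at hpair
  simp only [twoFormInnerBilin_apply, twoFormInner_smulRight_innerSL, hRη, hηskew, neg_div,
    Finset.sum_neg_distrib, ← Finset.sum_div, add_zero] at hpair
  linarith

lemma sum_comp_comp_eq_zero_of_bianchi (hR : ∀ A, R A = ∑ α, twoFormInner A (B α) • B α)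
    (hB : ∀ α, LinearMap.adjoint (B α) = -B α)
    (hBianchi : ∀ X Y Z : V,
      R (wedgeEnd X Y) Z + R (wedgeEnd Y Z) X + R (wedgeEnd Z X) Y = 0)
    {η : V →ₗ[ℝ] V} (hη : LinearMap.adjoint η = -η) (hBη : ∀ α, twoFormInner (B α) η = 0) :
    ∑ α, B α ∘ₗ η ∘ₗ B α = 0 := by
  ext X
  refine ext_inner_right ℝ fun Y => ?_
  simp only [LinearMap.sum_apply, LinearMap.comp_apply, sum_inner,
    inner_apply_eq_neg_of_adjoint_eq_neg (hB _), Finset.sum_neg_distrib,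
    sum_inner_comp_eq_zero_of_bianchi hR hB hBianchi hη hBη, LinearMap.zero_apply, inner_zero_left,
    neg_zero]

end Bianchi

end CasimirSetting

theorem casimir_eigenvalue_on_kernel
    {V : Type*} [NormedAddCommGroup V] [InnerProductSpace ℝ V] [FiniteDimensional ℝ V]
    (R Rh : (V →ₗ[ℝ] V) →ₗ[ℝ] (V →ₗ[ℝ] V))
    (hBianchi : ∀ X Y Z : V,
      R (wedgeEnd X Y) Z + R (wedgeEnd Y Z) X + R (wedgeEnd Z X) Y = 0)
    (hRhsq : ∀ A : V →ₗ[ℝ] V, Rh (Rh A) = R A)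
    (hRhself : ∀ A B : V →ₗ[ℝ] V, twoFormInner (Rh A) B = twoFormInner A (Rh B))
    (hRhskew : ∀ A : V →ₗ[ℝ] V, LinearMap.adjoint (Rh A) = -(Rh A))
    {k : ℕ} (ω : Fin k → (V →ₗ[ℝ] V))
    (hω_orth : ∀ α β, twoFormInner (ω α) (ω β) = if α = β then 1 else 0)
    (hω_span : Submodule.span ℝ (Set.range ω) = LinearMap.range R)
    (lam : ℝ)
    (hCas : ∀ v : V, (∑ α, Rh (ω α) (Rh (ω α) v)) = lam • v)
    (η : V →ₗ[ℝ] V) (hηskew : LinearMap.adjoint η = -η) (hηker : R η = 0) :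
    (∑ α, (Rh (ω α) ∘ₗ (Rh (ω α) ∘ₗ η - η ∘ₗ Rh (ω α))
        - (Rh (ω α) ∘ₗ η - η ∘ₗ Rh (ω α)) ∘ₗ Rh (ω α)))
      = (2 * lam) • η := by
  have hRhη : Rh η = 0 :=
    apply_eq_zero_of_twoFormInner_apply_apply hRhself (by simp [hRhsq, hηker, twoFormInner])
  have hBη : ∀ α, twoFormInner (Rh (ω α)) η = 0 := fun α => by
    rw [hRhself, hRhη]; simp [twoFormInner]
  have hmixed : ∑ α, Rh (ω α) ∘ₗ η ∘ₗ Rh (ω α) = 0 :=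
    sum_comp_comp_eq_zero_of_bianchi
      (apply_eq_sum_twoFormInner_smul hRhsq hRhself hω_orth hω_span.ge)
      (fun α => hRhskew (ω α)) hBianchi hηskew hBη
  have hcas : ∑ α, Rh (ω α) * Rh (ω α) = lam • 1 := LinearMap.ext fun v => by simpa using hCas v
  change ∑ α, ⁅Rh (ω α), ⁅Rh (ω α), η⁆⁆ = _
  rw [sum_lie_lie, hcas, show ∑ α, Rh (ω α) * η * Rh (ω α) = 0 from hmixed]
  simp only [smul_mul_assoc, mul_smul_comm, one_mul, mul_one, mul_zero, sub_zero, two_mul,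
    add_smul]
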